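/- Let X ∈ F_q^{d×L} be a random matrix and Z a random variable on the same finite probability space, and let M₁ ∈ F_q^{d×μ₁}, M₂ ∈ F_q^{d×μ₂} be fixed matrices. Then H(Z, XᵀM₁) + H(Z, XᵀM₂) ≥ H(Z, Xᵀ[M₁ ∩ M₂]) + H(Z, Xᵀ[M₁, M₂]), where [M₁ ∩ M₂] is any matrix whose columns form a basis of the intersection of the column spans of M₁ and M₂, and [M₁, M₂] is the column-wise concatenation. -/

import Mathlib

open scoped BigOperators
open Matrix

/-- Probability that the random variable `X` takes the value `a`. -/
noncomputable def pOf {Ω α : Type*} [Fintype Ω] [DecidableEq α]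
    (p : Ω → ℝ) (X : Ω → α) (a : α) : ℝ :=
  ∑ ω ∈ Finset.univ.filter (fun ω => X ω = a), p ω

/-- Shannon entropy (natural units) of a finitely-valued random variable. -/
noncomputable def Hent {Ω α : Type*} [Fintype Ω] [Fintype α] [DecidableEq α]
    (p : Ω → ℝ) (X : Ω → α) : ℝ :=
  ∑ a : α, Real.negMulLog (pOf p X a)

/-!
If `C` is a function of `A` and of `B`, then `H(C) + H(A, B) ≤ H(A) + H(B)`: the gap is the
Kullback–Leibler divergence of the law `r` of `(A, B)` from the coupling `u(a) v(b) / s(c)`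
(on `φ a = ψ b = c`) that makes `A` and `B` conditionally independent given `C`, and Gibbs'
inequality makes it nonnegative. Here `A = (Z, XᵀM₁)`, `B = (Z, XᵀM₂)` and
`C = (Z, XᵀN)` is a function of both because `N = M₁P = M₂Q`, while `(A, B)` is an injective
image of `(Z, Xᵀ[M₁, M₂])`.
-/

open Finset Real

section Distribution

variable {Ω α γ : Type*} [Fintype Ω] [DecidableEq α] [DecidableEq γ] (p : Ω → ℝ)

lemma pOf_nonneg (hp : ∀ ω, 0 ≤ p ω) (W : Ω → α) (a : α) : 0 ≤ pOf p W a :=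
  sum_nonneg fun ω _ => hp ω

lemma sum_pOf [Fintype α] (W : Ω → α) : ∑ a, pOf p W a = ∑ ω, p ω :=
  sum_fiberwise univ W p

lemma exists_eq_of_pOf_ne_zero {W : Ω → α} {a : α} (h : pOf p W a ≠ 0) : ∃ ω, W ω = a := by
  obtain ⟨ω, hω, -⟩ := exists_ne_zero_of_sum_ne_zero h
  exact ⟨ω, (mem_filter.1 hω).2⟩

variable {W : Ω → α} {V : Ω → γ} {f : α → γ}

lemma pOf_of_comp_eq [Fintype α] (hf : ∀ ω, f (W ω) = V ω) (c : γ) :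
    pOf p V c = ∑ a with f a = c, pOf p W a := by
  unfold pOf
  rw [← sum_fiberwise_of_maps_to (g := W) (t := {a | f a = c}) (by simp [hf])]
  refine sum_congr rfl fun a ha => ?_
  rw [filter_filter]
  congr 1
  ext ω
  simp only [mem_filter, mem_univ, true_and] at ha ⊢
  exact ⟨And.right, fun h => ⟨by rw [← hf, h, ha], h⟩⟩

lemma pOf_le_pOf_of_comp_eq (hp : ∀ ω, 0 ≤ p ω) (hf : ∀ ω, f (W ω) = V ω) (a : α) :
    pOf p W a ≤ pOf p V (f a) :=
  sum_le_sum_of_subset_of_nonneg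
    (fun ω => by simp only [mem_filter, mem_univ, true_and]; intro h; rw [← hf, h])
    fun ω _ _ => hp ω

lemma Hent_eq_neg_sum_of_comp_eq [Fintype α] [Fintype γ] (hf : ∀ ω, f (W ω) = V ω) :
    Hent p V = -∑ a, pOf p W a * log (pOf p V (f a)) := by
  simp only [Hent, negMulLog, neg_mul, sum_neg_distrib, neg_inj, pOf_of_comp_eq p hf, sum_mul]
  rw [← sum_fiberwise univ f]
  refine sum_congr rfl fun c _ => sum_congr rfl fun a ha => ?_
  rw [(mem_filter.1 ha).2]

lemma Hent_eq_of_comp_eq_of_injective [Fintype α] [Fintype γ] (hf : ∀ ω, f (W ω) = V ω)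
    (hinj : Function.Injective f) : Hent p V = Hent p W := by
  have hpOf : ∀ a, pOf p V (f a) = pOf p W a := fun a => by
    simp only [pOf, ← hf, hinj.eq_iff]
  rw [Hent_eq_neg_sum_of_comp_eq p hf]
  simp only [hpOf, Hent, negMulLog, neg_mul, sum_neg_distrib]

end Distribution

lemma mul_log_sub_mul_log_le {r q : ℝ} (hr : 0 ≤ r) (hq : 0 ≤ q) (hrq : r ≠ 0 → q ≠ 0) :
    r * log q - r * log r ≤ q - r := by
  rcases hr.eq_or_lt with rfl | hr
  · simpa using hq
  have hq : 0 < q := hq.lt_of_ne' (hrq hr.ne')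
  have h := mul_le_mul_of_nonneg_left (log_le_sub_one_of_pos (div_pos hq hr)) hr.le
  rwa [log_div hq.ne' hr.ne', mul_sub, mul_sub, mul_div_cancel₀ _ hr.ne', mul_one] at h

lemma sum_mul_log_le_sum_mul_log {ι : Type*} [Fintype ι] {r q : ι → ℝ} (hr : ∀ t, 0 ≤ r t)
    (hq : ∀ t, 0 ≤ q t) (hrq : ∀ t, r t ≠ 0 → q t ≠ 0) (hsum : ∑ t, q t ≤ ∑ t, r t) :
    ∑ t, r t * log (q t) ≤ ∑ t, r t * log (r t) := by
  have h := sum_le_sum fun t (_ : t ∈ univ) => mul_log_sub_mul_log_le (hr t) (hq t) (hrq t)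
  rw [sum_sub_distrib, sum_sub_distrib] at h
  linarith

section Submodularity

variable {Ω α β γ : Type*} [Fintype Ω] [DecidableEq α] [DecidableEq β] [DecidableEq γ] (p : Ω → ℝ)
  {A : Ω → α} {B : Ω → β} {C : Ω → γ} {φ : α → γ} {ψ : β → γ}

lemma sum_condIndepCoupling [Fintype α] [Fintype β] (hp : ∀ ω, 0 ≤ p ω) (hφ : ∀ ω, φ (A ω) = C ω)
    (hψ : ∀ ω, ψ (B ω) = C ω) :
    ∑ t : α × β, (if φ t.1 = ψ t.2 then pOf p A t.1 * pOf p B t.2 / pOf p C (φ t.1) else 0)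
      = ∑ ω, p ω := by
  rw [← sum_pOf p A, Fintype.sum_prod_type]
  refine sum_congr rfl fun a _ => ?_
  have hne : pOf p C (φ a) = 0 → pOf p A a = 0 := fun h =>
    le_antisymm (h ▸ pOf_le_pOf_of_comp_eq p hp hφ a) (pOf_nonneg p hp A a)
  simp_rw [eq_comm (a := φ a), ← sum_filter, mul_div_right_comm, ← mul_sum,
    ← pOf_of_comp_eq p hψ, div_mul_cancel_of_imp hne]

lemma pos_of_pOf_pair_ne_zero (hp : ∀ ω, 0 ≤ p ω) (hφ : ∀ ω, φ (A ω) = C ω)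
    (hψ : ∀ ω, ψ (B ω) = C ω) {t : α × β} (ht : pOf p (fun ω => (A ω, B ω)) t ≠ 0) :
    φ t.1 = ψ t.2 ∧ 0 < pOf p A t.1 ∧ 0 < pOf p B t.2 ∧ 0 < pOf p C (φ t.1) := by
  obtain ⟨ω, hω⟩ := exists_eq_of_pOf_ne_zero p ht
  have hr := (pOf_nonneg p hp _ t).lt_of_ne' ht
  have hu := hr.trans_le (pOf_le_pOf_of_comp_eq p hp (f := Prod.fst) (fun _ => rfl) t)
  have hv := hr.trans_le (pOf_le_pOf_of_comp_eq p hp (f := Prod.snd) (fun _ => rfl) t)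
  exact ⟨by rw [← hω, hφ, hψ], hu, hv, hu.trans_le (pOf_le_pOf_of_comp_eq p hp hφ t.1)⟩

theorem Hent_functional_submodularity [Fintype α] [Fintype β] [Fintype γ] (hp : ∀ ω, 0 ≤ p ω)
    (hφ : ∀ ω, φ (A ω) = C ω) (hψ : ∀ ω, ψ (B ω) = C ω) :
    Hent p C + Hent p (fun ω => (A ω, B ω)) ≤ Hent p A + Hent p B := by
  set AB := fun ω => (A ω, B ω)
  set r := pOf p AB
  set u := pOf p A
  set v := pOf p B
  set s := pOf p C
  set q : α × β → ℝ := fun t => if φ t.1 = ψ t.2 then u t.1 * v t.2 / s (φ t.1) else 0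
  have hsupp : ∀ t, r t ≠ 0 → φ t.1 = ψ t.2 ∧ 0 < u t.1 ∧ 0 < v t.2 ∧ 0 < s (φ t.1) :=
    fun _ => pos_of_pOf_pair_ne_zero p hp hφ hψ
  have hlog : ∑ t, r t * log (q t)
      = ∑ t, r t * log (u t.1) + ∑ t, r t * log (v t.2) - ∑ t, r t * log (s (φ t.1)) := by
    rw [← sum_add_distrib, ← sum_sub_distrib]
    refine sum_congr rfl fun t _ => ?_
    by_cases ht : r t = 0
    · simp [ht]
    obtain ⟨hc, hu, hv, hs⟩ := hsupp t ht
    simp only [q, if_pos hc, log_div (mul_pos hu hv).ne' hs.ne', log_mul hu.ne' hv.ne']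
    ring
  have hgibbs : ∑ t, r t * log (q t) ≤ ∑ t, r t * log (r t) := by
    refine sum_mul_log_le_sum_mul_log (pOf_nonneg p hp _) (fun t => ?_) (fun t ht => ?_) ?_
    · simp only [q]
      split_ifs
      · exact div_nonneg (mul_nonneg (pOf_nonneg p hp _ _) (pOf_nonneg p hp _ _))
          (pOf_nonneg p hp _ _)
      · exact le_rfl
    · obtain ⟨hc, hu, hv, hs⟩ := hsupp t ht
      simp only [q, if_pos hc]
      positivity
    · rw [sum_condIndepCoupling p hp hφ hψ, sum_pOf]
  have hA : Hent p A = -∑ t, r t * log (u t.1) :=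
    Hent_eq_neg_sum_of_comp_eq p (W := AB) (f := Prod.fst) fun _ => rfl
  have hB : Hent p B = -∑ t, r t * log (v t.2) :=
    Hent_eq_neg_sum_of_comp_eq p (W := AB) (f := Prod.snd) fun _ => rfl
  have hC : Hent p C = -∑ t, r t * log (s (φ t.1)) :=
    Hent_eq_neg_sum_of_comp_eq p (W := AB) (f := fun t => φ t.1) hφ
  have hAB : Hent p AB = -∑ t, r t * log (r t) :=
    Hent_eq_neg_sum_of_comp_eq p (W := AB) (f := id) fun _ => rfl
  linarith

end Submodularity

lemma Matrix.exists_mul_eq_of_range_mulVecLin_le {R m n k : Type*} [CommSemiring R]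
    [Fintype n] [Fintype k]    {A : Matrix m n R} {B : Matrix m k R}
    (h : LinearMap.range B.mulVecLin ≤ LinearMap.range A.mulVecLin) :
    ∃ P : Matrix n k R, A * P = B := by
  have hcol (j : k) : ∃ w, A.mulVecLin w = B.col j :=
    h (by rw [range_mulVecLin]; exact Submodule.subset_span ⟨j, rfl⟩)
  choose w hw using hcol
  refine ⟨(Matrix.of w)ᵀ, ?_⟩
  ext i j
  simpa [mul_apply, mulVec, dotProduct, mul_comm] using congrFun (hw j) i

theorem functional_submodularity_linear_general
    {F : Type*} [Field F] [Fintype F] [DecidableEq F]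
    {Ω ζ : Type*} [Fintype Ω] [Fintype ζ] [DecidableEq ζ]
    {d L μ₁ μ₂ μ₀ : ℕ}
    (p : Ω → ℝ) (hp0 : ∀ ω, 0 ≤ p ω)
    (X : Ω → Matrix (Fin d) (Fin L) F) (Z : Ω → ζ)
    (M₁ : Matrix (Fin d) (Fin μ₁) F) (M₂ : Matrix (Fin d) (Fin μ₂) F)
    (N : Matrix (Fin d) (Fin μ₀) F)
    (hNspan : LinearMap.range N.mulVecLin
      = LinearMap.range M₁.mulVecLin ⊓ LinearMap.range M₂.mulVecLin) :
    Hent p (fun ω => (Z ω, (X ω)ᵀ * N))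
      + Hent p (fun ω => (Z ω, (X ω)ᵀ * Matrix.fromCols M₁ M₂))
    ≤ Hent p (fun ω => (Z ω, (X ω)ᵀ * M₁))
      + Hent p (fun ω => (Z ω, (X ω)ᵀ * M₂)) := by
  obtain ⟨P, hP⟩ := exists_mul_eq_of_range_mulVecLin_le (hNspan.trans_le inf_le_left)
  obtain ⟨Q, hQ⟩ := exists_mul_eq_of_range_mulVecLin_le (hNspan.trans_le inf_le_right)
  have hsplit : Function.Injective fun t : ζ × Matrix (Fin L) (Fin μ₁ ⊕ Fin μ₂) F =>
      ((t.1, t.2.toCols₁), (t.1, t.2.toCols₂)) := by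
    rintro ⟨z, T⟩ ⟨z', T'⟩ h
    simp only [Prod.mk.injEq] at h
    rw [← fromCols_toCols T, ← fromCols_toCols T', h.1.2, h.2.2, h.1.1]
  have hpair : Hent p (fun ω => ((Z ω, (X ω)ᵀ * M₁), (Z ω, (X ω)ᵀ * M₂)))
      = Hent p (fun ω => (Z ω, (X ω)ᵀ * fromCols M₁ M₂)) :=
    Hent_eq_of_comp_eq_of_injective p (fun ω => by simp [mul_fromCols]) hsplit
  rw [← hpair]
  exact Hent_functional_submodularity p hp0 (φ := fun t => (t.1, t.2 * P))
    (ψ := fun t => (t.1, t.2 * Q)) (fun ω => by simp [Matrix.mul_assoc, hP])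
    (fun ω => by simp [Matrix.mul_assoc, hQ])

/-- Corollary of functional submodularity for linear projections.
For a random matrix `X`, random variable `Z`, fixed matrices `M₁`, `M₂`, and any matrix
`N` whose columns form a basis of the intersection of the column spans of `M₁` and `M₂`,
`H(Z, XᵀM₁) + H(Z, XᵀM₂) ≥ H(Z, XᵀN) + H(Z, Xᵀ[M₁, M₂])`. -/
theorem functional_submodularity_linear
    {F : Type*} [Field F] [Fintype F] [DecidableEq F]
    {Ω ζ : Type*} [Fintype Ω] [Fintype ζ] [DecidableEq ζ]
    {d L μ₁ μ₂ μ₀ : ℕ}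
    (p : Ω → ℝ) (hp0 : ∀ ω, 0 ≤ p ω) (hp1 : ∑ ω, p ω = 1)
    (X : Ω → Matrix (Fin d) (Fin L) F) (Z : Ω → ζ)
    (M₁ : Matrix (Fin d) (Fin μ₁) F) (M₂ : Matrix (Fin d) (Fin μ₂) F)
    (N : Matrix (Fin d) (Fin μ₀) F)
    (hNbasis : N.rank = μ₀)
    (hNspan : LinearMap.range N.mulVecLin
      = LinearMap.range M₁.mulVecLin ⊓ LinearMap.range M₂.mulVecLin) :
    Hent p (fun ω => (Z ω, (X ω)ᵀ * N))
      + Hent p (fun ω => (Z ω, (X ω)ᵀ * Matrix.fromCols M₁ M₂))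
    ≤ Hent p (fun ω => (Z ω, (X ω)ᵀ * M₁))
      + Hent p (fun ω => (Z ω, (X ω)ᵀ * M₂)) :=
  functional_submodularity_linear_general p hp0 X Z M₁ M₂ N hNspan
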